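/- arXiv:1610.01051 — 2 statements merged into one kernel-verified Lean document; each statement's English description precedes it below -/
import Mathlib

section
/- Let A = U - V be a proper weak regular splitting of type II of a semimonotone matrix A ∈ ℝ^{m×n}, and suppose ρ(U†V) > 0. Then there exists a vector x ≥ 0, x ≠ 0, such that U†Vx = ρ(U†V)x, Ax ≥ 0 with Ax ≠ 0, and Vx ≥ 0 with Vx ≠ 0. -/
open Matrix Polynomial

/-- `X` is the Moore-Penrose inverse of `A`. -/
def IsMP {m n : ℕ} (A : Matrix (Fin m) (Fin n) ℝ) (X : Matrix (Fin n) (Fin m) ℝ) : Prop :=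
  A * X * A = A ∧ X * A * X = X ∧ (A * X)ᵀ = A * X ∧ (X * A)ᵀ = X * A

/-- `A = U - V` is a proper splitting: `R(U)=R(A)` and `N(U)=N(A)`. -/
def ProperSplitting {m n : ℕ} (A U V : Matrix (Fin m) (Fin n) ℝ) : Prop :=
  A = U - V ∧ LinearMap.range U.mulVecLin = LinearMap.range A.mulVecLin ∧
    LinearMap.ker U.mulVecLin = LinearMap.ker A.mulVecLin

/-- `μ : ℂ` is an eigenvalue of the real matrix `M`. -/
def IsEigen {n : ℕ} (M : Matrix (Fin n) (Fin n) ℝ) (μ : ℂ) : Prop :=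
  ((M.map (algebraMap ℝ ℂ)).charpoly).IsRoot μ

/-- The spectral radius of a real square matrix. -/
noncomputable def specRad {n : ℕ} (M : Matrix (Fin n) (Fin n) ℝ) : ℝ :=
  sSup {r : ℝ | ∃ μ : ℂ, IsEigen M μ ∧ r = ‖μ‖}

/-- Entrywise nonnegativity. -/
def EntryNonneg {m n : ℕ} (A : Matrix (Fin m) (Fin n) ℝ) : Prop := ∀ i j, 0 ≤ A i j

/-- Entrywise order. -/
def EntryLE {m n : ℕ} (A B : Matrix (Fin m) (Fin n) ℝ) : Prop := ∀ i j, A i j ≤ B i j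

/-- Entrywise strict order. -/
def EntryLT {m n : ℕ} (A B : Matrix (Fin m) (Fin n) ℝ) : Prop := ∀ i j, A i j < B i j

/-!
Since `Ud * V` and `V * Ud` have the same nonzero eigenvalues, the weak Perron–Frobenius theorem
for the nonnegative matrix `V * Ud` gives `y ≥ 0`, `y ≠ 0` with `V Ud y = ρ y`; take `x = Ud y`.
Properness puts `y` in the range of `U`, so `U x = y`, `V x = ρ y` and `A x = (1 - ρ) y`. As
`Ad A = Ud U` (the orthogonal projector onto `N(A)^⊥ = N(U)^⊥`), `x = (1 - ρ) Ad y`; since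
`x ≥ 0`, `x ≠ 0` and `Ad ≥ 0`, this forces `ρ < 1`.

Perron–Frobenius goes through Gelfand's formula: for `t > ρ(C)` the Neumann series shows
`(t - C)⁻¹ ≥ 0`. If `C z = μ z` with `‖μ‖ = ρ(C)`, then `c = |z|` satisfies `ρ c ≤ C c`, so
`(t - C)⁻¹ c`, normalised, is a `(t - ρ)`-approximate eigenvector in the standard simplex, and
compactness of the simplex yields an exact one.
-/

open Filter

section Eigenvalues

variable {k : ℕ}

lemma isEigen_iff_mem_spectrum (M : Matrix (Fin k) (Fin k) ℝ) (μ : ℂ) :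
    IsEigen M μ ↔ μ ∈ spectrum ℂ (M.map (algebraMap ℝ ℂ)) :=
  Matrix.mem_spectrum_iff_isRoot_charpoly.symm

lemma isEigen_iff_exists_mulVec_eq (M : Matrix (Fin k) (Fin k) ℝ) (μ : ℂ) :
    IsEigen M μ ↔ ∃ z : Fin k → ℂ, z ≠ 0 ∧ M.map (algebraMap ℝ ℂ) *ᵥ z = μ • z := by
  rw [isEigen_iff_mem_spectrum, spectrum.mem_iff, Algebra.algebraMap_eq_smul_one,
    Matrix.isUnit_iff_isUnit_det, isUnit_iff_ne_zero, not_not, ← Matrix.exists_mulVec_eq_zero_iff]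
  simp only [Matrix.sub_mulVec, Matrix.smul_mulVec, Matrix.one_mulVec, sub_eq_zero,
    eq_comm (a := μ • _)]

lemma IsEigen.mul_comm {a b : ℕ} {X : Matrix (Fin a) (Fin b) ℝ} {Y : Matrix (Fin b) (Fin a) ℝ}
    {μ : ℂ} (h : IsEigen (X * Y) μ) (hμ : μ ≠ 0) : IsEigen (Y * X) μ := by
  rw [isEigen_iff_exists_mulVec_eq] at h ⊢
  obtain ⟨z, hz, hXYz⟩ := h
  rw [Matrix.map_mul, ← Matrix.mulVec_mulVec] at hXYz
  refine ⟨Y.map (algebraMap ℝ ℂ) *ᵥ z, fun h0 => hz ?_, ?_⟩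
  · rw [h0, Matrix.mulVec_zero, eq_comm, smul_eq_zero] at hXYz
    exact hXYz.resolve_left hμ
  · rw [Matrix.map_mul, ← Matrix.mulVec_mulVec, hXYz, Matrix.mulVec_smul]

lemma finite_setOf_norm_isEigen (M : Matrix (Fin k) (Fin k) ℝ) :
    {r : ℝ | ∃ μ : ℂ, IsEigen M μ ∧ r = ‖μ‖}.Finite :=
  ((Polynomial.finite_setOfPred_isRoot (Matrix.charpoly_monic _).ne_zero).image (‖·‖)).subset
    fun _ ⟨μ, hμ, hr⟩ => ⟨μ, hμ, hr.symm⟩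

lemma norm_le_specRad {M : Matrix (Fin k) (Fin k) ℝ} {μ : ℂ} (h : IsEigen M μ) :
    ‖μ‖ ≤ specRad M :=
  le_csSup (finite_setOf_norm_isEigen M).bddAbove ⟨μ, h, rfl⟩

lemma specRad_nonneg (M : Matrix (Fin k) (Fin k) ℝ) : 0 ≤ specRad M :=
  Real.sSup_nonneg fun _ ⟨_, _, hr⟩ => hr ▸ norm_nonneg _

lemma specRad_le {M : Matrix (Fin k) (Fin k) ℝ} {r : ℝ} (hr : 0 ≤ r)
    (h : ∀ μ, IsEigen M μ → ‖μ‖ ≤ r) : specRad M ≤ r :=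
  Real.sSup_le (fun _ ⟨μ, hμ, hr⟩ => hr ▸ h μ hμ) hr

lemma exists_isEigen_norm_eq_specRad {M : Matrix (Fin k) (Fin k) ℝ} (h : 0 < specRad M) :
    ∃ μ, IsEigen M μ ∧ ‖μ‖ = specRad M := by
  have hne : {r : ℝ | ∃ μ : ℂ, IsEigen M μ ∧ r = ‖μ‖}.Nonempty := by
    by_contra he
    rw [Set.not_nonempty_iff_eq_empty] at he
    rw [specRad, he, Real.sSup_empty] at h
    exact h.false
  obtain ⟨μ, hμ, hr⟩ := hne.csSup_mem (finite_setOf_norm_isEigen M)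
  exact ⟨μ, hμ, hr.symm⟩

lemma specRad_mul_comm {a b : ℕ} (X : Matrix (Fin a) (Fin b) ℝ) (Y : Matrix (Fin b) (Fin a) ℝ) :
    specRad (X * Y) = specRad (Y * X) := by
  have key : ∀ {a b : ℕ} (X : Matrix (Fin a) (Fin b) ℝ) (Y : Matrix (Fin b) (Fin a) ℝ),
      specRad (X * Y) ≤ specRad (Y * X) := fun X Y =>
    specRad_le (specRad_nonneg _) fun μ hμ => by
      rcases eq_or_ne μ 0 with rfl | h0
      · simpa using specRad_nonneg _
      · exact norm_le_specRad (hμ.mul_comm h0)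
  exact (key X Y).antisymm (key Y X)

end Eigenvalues

section NonnegMatrix

variable {ι κ R : Type*} [Fintype κ] [Semiring R] [PartialOrder R] [IsOrderedRing R]
  {M : Matrix ι κ R}

lemma mulVec_nonneg_of_nonneg (hM : ∀ i j, 0 ≤ M i j) {v : κ → R} (hv : 0 ≤ v) : 0 ≤ M *ᵥ v :=
  fun i => dotProduct_nonneg_of_nonneg (hM i) hv

lemma mulVec_le_mulVec_of_nonneg (hM : ∀ i j, 0 ≤ M i j) {v w : κ → R} (h : v ≤ w) :
    M *ᵥ v ≤ M *ᵥ w :=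
  fun i => dotProduct_le_dotProduct_of_nonneg_left h (hM i)

end NonnegMatrix

section PerronFrobenius

variable {k : ℕ}

open scoped Matrix.Norms.Frobenius in
lemma summable_pow_smul_of_specRad_lt {C : Matrix (Fin k) (Fin k) ℝ} {t : ℝ} (ht : specRad C < t) :
    Summable fun n : ℕ => (t⁻¹ • C) ^ n := by
  obtain ⟨s, hρs, hst⟩ := exists_between ht
  have hs0 : 0 < s := (specRad_nonneg C).trans_lt hρs
  have ht0 : 0 < t := hs0.trans hst
  set Cc := C.map (algebraMap ℝ ℂ)
  have hCc : spectralRadius ℂ Cc < ENNReal.ofReal s := by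
    refine lt_of_le_of_lt (iSup₂_le fun μ hμ => ?_) ((ENNReal.ofReal_lt_ofReal_iff hs0).mpr hρs)
    rw [← enorm_eq_nnnorm, ← ofReal_norm]
    exact ENNReal.ofReal_le_ofReal (norm_le_specRad ((isEigen_iff_mem_spectrum C μ).mpr hμ))
  have hbound : ∀ᶠ n : ℕ in atTop, ‖(t⁻¹ • C) ^ n‖ ≤ (s / t) ^ n := by
    filter_upwards [(spectrum.pow_norm_pow_one_div_tendsto_nhds_spectralRadius Cc).eventually
      (gt_mem_nhds hCc), eventually_ne_atTop 0] with n hn hn0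
    rw [ENNReal.ofReal_lt_ofReal_iff hs0, one_div,
      Real.rpow_inv_lt_iff_of_pos (norm_nonneg _) hs0.le (by positivity), Real.rpow_natCast,
      ← Matrix.map_pow, Matrix.frobenius_norm_map_eq _ _ fun a => by simp] at hn
    rw [_root_.smul_pow, norm_smul, div_pow, norm_pow, norm_inv, Real.norm_of_nonneg ht0.le,
      div_eq_inv_mul, inv_pow]
    gcongr
  exact .of_norm_bounded_eventually (summable_geometric_of_lt_one (by positivity)
    ((div_lt_one ht0).mpr hst)) (Nat.cofinite_eq_atTop ▸ hbound)

lemma exists_nonneg_inverse_smul_one_sub {C : Matrix (Fin k) (Fin k) ℝ} (hC : ∀ i j, 0 ≤ C i j)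
    {t : ℝ} (ht : specRad C < t) :
    ∃ R : Matrix (Fin k) (Fin k) ℝ, (∀ i j, 0 ≤ R i j) ∧ (t • 1 - C) * R = 1 := by
  have ht0 : 0 < t := (specRad_nonneg C).trans_lt ht
  have hsum := summable_pow_smul_of_specRad_lt ht
  refine ⟨t⁻¹ • ∑' n, (t⁻¹ • C) ^ n, fun i j => ?_, ?_⟩
  · rw [Matrix.smul_apply]
    erw [tsum_apply hsum, tsum_apply (Pi.summable.mp hsum i)]
    exact mul_nonneg (inv_nonneg.mpr ht0.le) (tsum_nonneg fun n => Matrix.pow_apply_nonneg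
      (fun i j => mul_nonneg (inv_nonneg.mpr ht0.le) (hC i j)) n i j)
  · have h : t⁻¹ • (t • 1 - C) = 1 - t⁻¹ • C := by
      rw [smul_sub, smul_smul, inv_mul_cancel₀ ht0.ne', one_smul]
    rw [Matrix.mul_smul, ← Matrix.smul_mul, h, hsum.one_sub_mul_tsum_pow]

lemma exists_nonneg_mulVec_ge_specRad_smul {C : Matrix (Fin k) (Fin k) ℝ} (hC : ∀ i j, 0 ≤ C i j)
    (hρ : 0 < specRad C) :
    ∃ c : Fin k → ℝ, 0 ≤ c ∧ c ≠ 0 ∧ specRad C • c ≤ C *ᵥ c := by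
  obtain ⟨μ, hμ, hμρ⟩ := exists_isEigen_norm_eq_specRad hρ
  obtain ⟨z, hz, hCz⟩ := (isEigen_iff_exists_mulVec_eq C μ).mp hμ
  refine ⟨fun i => ‖z i‖, fun i => norm_nonneg _,
    fun h => hz (funext fun i => norm_eq_zero.mp (congrFun h i)), fun i => ?_⟩
  calc specRad C * ‖z i‖ = ‖(C.map (algebraMap ℝ ℂ) *ᵥ z) i‖ := by
        rw [hCz, Pi.smul_apply, smul_eq_mul, norm_mul, hμρ]
    _ = ‖∑ j, C.map (algebraMap ℝ ℂ) i j * z j‖ := rfl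
    _ ≤ ∑ j, ‖C.map (algebraMap ℝ ℂ) i j * z j‖ := norm_sum_le _ _
    _ = (C *ᵥ fun i => ‖z i‖) i := by
        simp [Matrix.mulVec, dotProduct, abs_of_nonneg (hC _ _)]

lemma exists_mem_stdSimplex_mulVec_eq_smul {ι : Type*} [Fintype ι] (C : Matrix ι ι ℝ) (ρ : ℝ)
    (happrox : ∀ ε > 0, ∃ u ∈ stdSimplex ℝ ι, ∑ i, |(C *ᵥ u - ρ • u) i| ≤ ε) :
    ∃ u ∈ stdSimplex ℝ ι, C *ᵥ u = ρ • u := by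
  obtain ⟨u₁, hu₁, -⟩ := happrox 1 one_pos
  obtain ⟨u, hu, hmin⟩ := (isCompact_stdSimplex ℝ ι).exists_isMinOn ⟨u₁, hu₁⟩
    (f := fun u => ∑ i, |(C *ᵥ u - ρ • u) i|) (by fun_prop)
  refine ⟨u, hu, ?_⟩
  have h : ∑ i, |(C *ᵥ u - ρ • u) i| ≤ 0 := le_of_forall_pos_le_add fun ε hε => by
    obtain ⟨v, hv, hvε⟩ := happrox ε hε
    linarith [isMinOn_iff.mp hmin v hv]
  have hzero := (Finset.sum_eq_zero_iff_of_nonneg fun i _ => abs_nonneg _).mp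
    (h.antisymm (Finset.sum_nonneg fun i _ => abs_nonneg _))
  funext i
  exact sub_eq_zero.mp (abs_eq_zero.mp (hzero i (Finset.mem_univ i)))

lemma exists_mem_stdSimplex_sum_abs_le {ι : Type*} [Fintype ι] [DecidableEq ι]
    {C R : Matrix ι ι ℝ} {c : ι → ℝ} {ρ t : ℝ} (hR0 : ∀ i j, 0 ≤ R i j) (hR : (t • 1 - C) * R = 1)
    (hc0 : 0 ≤ c) (hc : c ≠ 0) (hCc : ρ • c ≤ C *ᵥ c) :
    ∃ u ∈ stdSimplex ℝ ι, ∑ i, |(C *ᵥ u - ρ • u) i| ≤ t - ρ := by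
  set w := R *ᵥ c
  have hw : (t • 1 - C) *ᵥ w = c := by rw [Matrix.mulVec_mulVec, hR, Matrix.one_mulVec]
  have hcw : c ≤ (t - ρ) • w := calc
    c = R *ᵥ ((t • 1 - C) *ᵥ c) := by
      rw [Matrix.mulVec_mulVec, mul_eq_one_comm.mp hR, Matrix.one_mulVec]
    _ ≤ R *ᵥ ((t - ρ) • c) := mulVec_le_mulVec_of_nonneg hR0 fun i => by
      have := hCc i
      simp only [Matrix.sub_mulVec, Matrix.smul_mulVec, Matrix.one_mulVec, Pi.sub_apply,
        Pi.smul_apply, smul_eq_mul] at this ⊢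
      linarith
    _ = (t - ρ) • w := Matrix.mulVec_smul _ _ _
  have hw0 : 0 ≤ w := mulVec_nonneg_of_nonneg hR0 hc0
  set S := ∑ i, w i
  have hS : 0 < S := by
    obtain ⟨i, hi⟩ := Function.ne_iff.mp hc
    have hcwi : 0 < (t - ρ) * w i := ((hc0 i).lt_of_ne' hi).trans_le (hcw i)
    have hwi : 0 < w i := pos_of_mul_pos_right hcwi (pos_of_mul_pos_left hcwi (hw0 i)).le
    exact hwi.trans_le (Finset.single_le_sum (fun j _ => hw0 j) (Finset.mem_univ i))
  have hCw : C *ᵥ (S⁻¹ • w) - ρ • (S⁻¹ • w) = S⁻¹ • ((t - ρ) • w - c) := by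
    rw [← hw, Matrix.sub_mulVec, Matrix.smul_mulVec, Matrix.one_mulVec, Matrix.mulVec_smul]
    module
  refine ⟨S⁻¹ • w, ⟨fun i => mul_nonneg (inv_nonneg.mpr hS.le) (hw0 i), ?_⟩, ?_⟩
  · simp only [Pi.smul_apply, smul_eq_mul, ← Finset.mul_sum, inv_mul_cancel₀ hS.ne', S]
  rw [hCw]
  calc ∑ i, |(S⁻¹ • ((t - ρ) • w - c)) i| = ∑ i, S⁻¹ * ((t - ρ) * w i - c i) :=
        Finset.sum_congr rfl fun i _ => abs_of_nonneg (mul_nonneg (inv_nonneg.mpr hS.le)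
          (sub_nonneg.mpr (hcw i)))
    _ ≤ ∑ i, S⁻¹ * ((t - ρ) * w i) := by gcongr with i; exact sub_le_self _ (hc0 i)
    _ = t - ρ := by
      rw [← Finset.mul_sum, ← Finset.mul_sum, mul_left_comm, inv_mul_cancel₀ hS.ne', mul_one]

theorem exists_nonneg_eigenvector_specRad {C : Matrix (Fin k) (Fin k) ℝ}
    (hC : ∀ i j, 0 ≤ C i j) (hρ : 0 < specRad C) :
    ∃ y : Fin k → ℝ, 0 ≤ y ∧ y ≠ 0 ∧ C *ᵥ y = specRad C • y := by
  obtain ⟨c, hc0, hc, hCc⟩ := exists_nonneg_mulVec_ge_specRad_smul hC hρ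
  obtain ⟨u, hu, hCu⟩ := exists_mem_stdSimplex_mulVec_eq_smul C (specRad C) fun ε hε => by
    obtain ⟨R, hR0, hR⟩ := exists_nonneg_inverse_smul_one_sub hC (lt_add_of_pos_right _ hε)
    simpa using exists_mem_stdSimplex_sum_abs_le hR0 hR hc0 hc hCc
  exact ⟨u, hu.1, fun h => by simpa [h] using hu.2, hCu⟩

end PerronFrobenius

lemma Matrix.eq_of_transpose_eq_of_mul_self_eq_of_ker {ι R : Type*} [Fintype ι] [DecidableEq ι]
    [CommRing R] {P Q : Matrix ι ι R} (hP : Pᵀ = P) (hQ : Qᵀ = Q) (hPP : P * P = P)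
    (hQQ : Q * Q = Q) (hker : ∀ v, P *ᵥ v = 0 ↔ Q *ᵥ v = 0) : P = Q := by
  have absorb : ∀ {P Q : Matrix ι ι R}, P * P = P → (∀ v, P *ᵥ v = 0 → Q *ᵥ v = 0) →
      Q * P = Q := fun {P Q} hPP hker => by
    refine Matrix.ext_iff_mulVec.mpr fun v => ?_
    have h := hker (v - P *ᵥ v) (by rw [Matrix.mulVec_sub, Matrix.mulVec_mulVec, hPP, sub_self])
    rw [Matrix.mulVec_sub, sub_eq_zero] at h
    rw [← Matrix.mulVec_mulVec, h]
  calc P = (P * Q)ᵀ := by rw [absorb hQQ fun v => (hker v).mpr, hP]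
    _ = Q * P := by rw [Matrix.transpose_mul, hP, hQ]
    _ = Q := absorb hPP fun v => (hker v).mp

section MoorePenrose

variable {m n : ℕ} {A U V : Matrix (Fin m) (Fin n) ℝ} {X Y : Matrix (Fin n) (Fin m) ℝ}

lemma IsMP.mulVec_eq_zero_iff (h : IsMP A X) (v : Fin n → ℝ) :
    (X * A) *ᵥ v = 0 ↔ A *ᵥ v = 0 := by
  refine ⟨fun hv => ?_, fun hv => by rw [← Matrix.mulVec_mulVec, hv, Matrix.mulVec_zero]⟩
  rw [← h.1, Matrix.mul_assoc, ← Matrix.mulVec_mulVec, hv, Matrix.mulVec_zero]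

lemma IsMP.mul_eq_of_ker_eq (hA : IsMP A X) (hU : IsMP U Y)
    (hker : LinearMap.ker U.mulVecLin = LinearMap.ker A.mulVecLin) : X * A = Y * U := by
  refine Matrix.eq_of_transpose_eq_of_mul_self_eq_of_ker hA.2.2.2 hU.2.2.2
    (by rw [← Matrix.mul_assoc, hA.2.1]) (by rw [← Matrix.mul_assoc, hU.2.1]) fun v => ?_
  rw [hA.mulVec_eq_zero_iff, hU.mulVec_eq_zero_iff]
  exact (SetLike.ext_iff.mp hker v).symm

lemma IsMP.mulVec_mulVec_of_mem_range (hU : IsMP U Y) {y : Fin m → ℝ}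
    (hy : y ∈ LinearMap.range U.mulVecLin) : U *ᵥ (Y *ᵥ y) = y := by
  obtain ⟨w, rfl⟩ := hy
  rw [Matrix.mulVecLin_apply, Matrix.mulVec_mulVec, Matrix.mulVec_mulVec, hU.1]

lemma ProperSplitting.mem_range_of_mulVec_eq_smul (h : ProperSplitting A U V)
    {W : Matrix (Fin n) (Fin m) ℝ} {y : Fin m → ℝ} {ρ : ℝ} (hρ : ρ ≠ 0)
    (hy : (V * W) *ᵥ y = ρ • y) : y ∈ LinearMap.range U.mulVecLin := by
  have hVW : (V * W) *ᵥ y = U *ᵥ (W *ᵥ y) - A *ᵥ (W *ᵥ y) := by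
    rw [← Matrix.sub_mulVec, h.1, sub_sub_cancel, Matrix.mulVec_mulVec]
  have hmem : (V * W) *ᵥ y ∈ LinearMap.range U.mulVecLin := by
    rw [hVW]
    exact Submodule.sub_mem _ ⟨_, rfl⟩ (h.2.1 ▸ ⟨_, rfl⟩)
  simpa [hy, hρ] using Submodule.smul_mem _ ρ⁻¹ hmem

end MoorePenrose

theorem stmt5 {m n : ℕ} (A U V : Matrix (Fin m) (Fin n) ℝ)
    (Ad : Matrix (Fin n) (Fin m) ℝ) (Ud : Matrix (Fin n) (Fin m) ℝ)
    (hps : ProperSplitting A U V) (hA : IsMP A Ad) (hU : IsMP U Ud)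
    (hsemi : EntryNonneg Ad) (hUd : EntryNonneg Ud) (hVUd : EntryNonneg (V * Ud))
    (hrho : 0 < specRad (Ud * V)) :
    ∃ x : Fin n → ℝ, (∀ i, 0 ≤ x i) ∧ x ≠ 0 ∧
      (Ud * V).mulVec x = specRad (Ud * V) • x ∧
      (∀ i, 0 ≤ A.mulVec x i) ∧ A.mulVec x ≠ 0 ∧
      (∀ i, 0 ≤ V.mulVec x i) ∧ V.mulVec x ≠ 0 := by
  set ρ := specRad (Ud * V)
  obtain ⟨y, hy0, hy, hVUy⟩ :=
    exists_nonneg_eigenvector_specRad hVUd (specRad_mul_comm Ud V ▸ hrho)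
  rw [← specRad_mul_comm] at hVUy
  set x := Ud *ᵥ y
  have hUx : U *ᵥ x = y :=
    hU.mulVec_mulVec_of_mem_range (hps.mem_range_of_mulVec_eq_smul hrho.ne' hVUy)
  have hVx : V *ᵥ x = ρ • y := by rw [Matrix.mulVec_mulVec, hVUy]
  have hAx : A *ᵥ x = (1 - ρ) • y := by
    rw [hps.1, Matrix.sub_mulVec, hUx, hVx, sub_smul, one_smul]
  -- `x` lies in the range of `Ud`, on which `Ad * A = Ud * U` is the identity
  have hxAd : x = (1 - ρ) • (Ad *ᵥ y) := calc
    x = (Ad * A) *ᵥ x := by rw [hA.mul_eq_of_ker_eq hU hps.2.2, Matrix.mulVec_mulVec, hU.2.1]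
    _ = (1 - ρ) • (Ad *ᵥ y) := by rw [← Matrix.mulVec_mulVec, hAx, Matrix.mulVec_smul]
  have hx0 : 0 ≤ x := mulVec_nonneg_of_nonneg hUd hy0
  have hxne : x ≠ 0 := fun h => hy (by simpa [h, hrho.ne', eq_comm] using hVx)
  have hρ1 : ρ < 1 := by
    by_contra! h
    refine hxne (le_antisymm ?_ hx0)
    rw [hxAd]
    exact smul_nonpos_of_nonpos_of_nonneg (sub_nonpos.mpr h) (mulVec_nonneg_of_nonneg hsemi hy0)
  refine ⟨x, hx0, hxne, ?_, ?_, ?_, ?_, ?_⟩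
  · rw [← Matrix.mulVec_mulVec, hVx, Matrix.mulVec_smul]
  · rw [hAx]; exact smul_nonneg (sub_nonneg.mpr hρ1.le) hy0
  · rw [hAx]; exact smul_ne_zero (sub_ne_zero.mpr hρ1.ne') hy
  · rw [hVx]; exact smul_nonneg hrho.le hy0
  · rw [hVx]; exact smul_ne_zero hrho.ne' hy
end

section
/- Let (U_k, V_k, E_k), k=1,…,p, be a proper weak regular multisplitting of a semimonotone matrix A ∈ ℝ^{m×n} with A ≥ 0 and R(E_k) ⊆ R(Aᵀ) for each k. Then the splitting A = B - C induced by H = Σ E_k U_k† V_k, with B = A(I-H)⁻¹, is a proper regular splitting, i.e., additionally C = A(I-H)⁻¹H ≥ 0. -/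
open Matrix Polynomial

/-!
As the `E k` sum to `1` and map into `R(Aᵀ)`, `A` has full column rank, so `A†A = 1`; each
`U_k` has the kernel and range of `A`, so `U_k†U_k = 1` and `U_k U_k† = AA†`. Hence
`U_k†V_k = 1 - U_k†A`, `1 - H = WA` and `(1 - H)A† = W` with `W = ∑ E_k U_k† ≥ 0`. The positive
vector `x = A†1` satisfies `(1 - H)x = W1 > 0`, and since `H ≥ 0` a minimal-ratio argument gives
`(1 - H)y ≥ 0 → y ≥ 0`: `1 - H` is invertible with nonnegative inverse, and the rest is algebra.
-/

namespace Matrix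

variable {R : Type*} {l m n : Type*} [Fintype n]

lemma eq_of_mul_eq_mul_of_injective [CommRing R] [DecidableEq l] [Fintype l]
    {A : Matrix m n R} (hA : Function.Injective A.mulVec) {M N : Matrix n l R}
    (h : A * M = A * N) : M = N :=
  ext_of_mulVec_single fun j => hA <| by rw [mulVec_mulVec, mulVec_mulVec, h]

lemma mulVec_injective_of_range_transpose_eq_top [Field R] [LinearOrder R]
    [IsStrictOrderedRing R] [Fintype m] {A : Matrix m n R}
    (h : LinearMap.range Aᵀ.mulVecLin = ⊤) : Function.Injective A.mulVec := by
  rw [← coe_mulVecLin, ← LinearMap.ker_eq_bot, LinearMap.ker_eq_bot']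
  intro v hv
  obtain ⟨u, hu⟩ : v ∈ LinearMap.range Aᵀ.mulVecLin := h ▸ Submodule.mem_top
  rw [mulVecLin_apply] at hu hv
  refine dotProduct_self_eq_zero.mp ?_
  calc v ⬝ᵥ v = (Aᵀ *ᵥ u) ⬝ᵥ v := by rw [hu]
    _ = u ⬝ᵥ (A *ᵥ v) := by rw [mulVec_transpose, dotProduct_mulVec]
    _ = 0 := by rw [hv, dotProduct_zero]

lemma range_eq_top_of_sum_eq_one [CommRing R] [DecidableEq n] {ι : Type*} [Fintype ι]
    {E : ι → Matrix n n R} {S : Submodule R (n → R)}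
    (hE : ∀ k, LinearMap.range (E k).mulVecLin ≤ S)
    (hsum : ∑ k, E k = 1) : S = ⊤ := by
  refine eq_top_iff.mpr fun v _ => ?_
  have hv : v = ∑ k, E k *ᵥ v := by rw [← sum_mulVec, hsum, one_mulVec]
  rw [hv]
  exact Submodule.sum_mem _ fun k _ => hE k ⟨v, rfl⟩

end Matrix

open Matrix

lemma EntryNonneg.mul {l m n : ℕ} {M : Matrix (Fin l) (Fin m) ℝ}
    {N : Matrix (Fin m) (Fin n) ℝ} (hM : EntryNonneg M) (hN : EntryNonneg N) :
    EntryNonneg (M * N) := fun i j => by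
  rw [mul_apply]
  exact Finset.sum_nonneg fun k _ => mul_nonneg (hM i k) (hN k j)

lemma EntryNonneg.sum {ι : Type*} [Fintype ι] {m n : ℕ} {M : ι → Matrix (Fin m) (Fin n) ℝ}
    (hM : ∀ k, EntryNonneg (M k)) : EntryNonneg (∑ k, M k) := fun i j => by
  rw [Matrix.sum_apply]
  exact Finset.sum_nonneg fun k _ => hM k i j

lemma EntryNonneg.sum_row_pos_of_mul_eq_one {m n : ℕ} {X : Matrix (Fin n) (Fin m) ℝ}
    {A : Matrix (Fin m) (Fin n) ℝ} (hX : EntryNonneg X) (h : X * A = 1) (i : Fin n) :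
    0 < ∑ j, X i j := by
  refine (Finset.sum_nonneg fun j _ => hX i j).lt_of_ne fun hzero => ?_
  have hrow := (Finset.sum_eq_zero_iff_of_nonneg fun j _ => hX i j).mp hzero.symm
  have : (X * A) i i = 0 := by
    rw [mul_apply]
    exact Finset.sum_eq_zero fun j hj => by rw [hrow j hj, zero_mul]
  simp [h] at this

namespace IsMP

variable {m n n' : ℕ} {A : Matrix (Fin m) (Fin n) ℝ} {X : Matrix (Fin n) (Fin m) ℝ}

lemma mul_eq_one_of_injective (hA : IsMP A X) (hinj : Function.Injective A.mulVec) :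
    X * A = 1 :=
  eq_of_mul_eq_mul_of_injective hinj (by rw [← Matrix.mul_assoc, hA.1, Matrix.mul_one])

lemma mul_mul_eq_of_range_le (hA : IsMP A X) {B : Matrix (Fin m) (Fin n') ℝ}
    (h : LinearMap.range B.mulVecLin ≤ LinearMap.range A.mulVecLin) : A * X * B = B := by
  refine ext_of_mulVec_single fun j => ?_
  obtain ⟨w, hw⟩ := h ⟨Pi.single j 1, rfl⟩
  simp only [mulVecLin_apply] at hw
  rw [← mulVec_mulVec, ← hw, mulVec_mulVec, hA.1]

/-- Both products are the orthogonal projection onto the common range. -/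
lemma mul_eq_of_range_eq (hA : IsMP A X) {U : Matrix (Fin m) (Fin n') ℝ}
    {Y : Matrix (Fin n') (Fin m) ℝ} (hU : IsMP U Y)
    (h : LinearMap.range U.mulVecLin = LinearMap.range A.mulVecLin) : A * X = U * Y :=
  calc A * X = (U * Y * (A * X))ᵀ := by
        rw [← Matrix.mul_assoc, hU.mul_mul_eq_of_range_le h.ge, hA.2.2.1]
    _ = A * X * (U * Y) := by rw [transpose_mul, hA.2.2.1, hU.2.2.1]
    _ = U * Y := by rw [← Matrix.mul_assoc, hA.mul_mul_eq_of_range_le h.le]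

lemma mul_nonsing_inv_of_mul_eq_one (hA : IsMP A X) (hXA : X * A = 1)
    {K : Matrix (Fin n) (Fin n) ℝ} (hK : IsUnit K.det) : IsMP (A * K⁻¹) (K * X) := by
  have hBX : A * K⁻¹ * (K * X) = A * X := by
    rw [Matrix.mul_assoc, ← Matrix.mul_assoc K⁻¹, nonsing_inv_mul _ hK, Matrix.one_mul]
  have hXB : K * X * (A * K⁻¹) = 1 := by
    rw [Matrix.mul_assoc, ← Matrix.mul_assoc X, hXA, Matrix.one_mul, mul_nonsing_inv _ hK]
  refine ⟨?_, ?_, ?_, ?_⟩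
  · rw [hBX, ← Matrix.mul_assoc, hA.1]
  · rw [hXB, Matrix.one_mul]
  · rw [hBX, hA.2.2.1]
  · rw [hXB, transpose_one]

end IsMP

namespace ProperSplitting

variable {m n : ℕ} {A U V : Matrix (Fin m) (Fin n) ℝ}

lemma injective (hs : ProperSplitting A U V) (hinj : Function.Injective A.mulVec) :
    Function.Injective U.mulVec := by
  rw [← coe_mulVecLin, ← LinearMap.ker_eq_bot, hs.2.2, LinearMap.ker_eq_bot, coe_mulVecLin]
  exact hinj

lemma pinv_mul_eq (hs : ProperSplitting A U V) (hinj : Function.Injective A.mulVec)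
    {Y : Matrix (Fin n) (Fin m) ℝ} (hU : IsMP U Y) : Y * V = 1 - Y * A := by
  rw [show V = U - A by rw [hs.1, sub_sub_cancel], Matrix.mul_sub,
    hU.mul_eq_one_of_injective (hs.injective hinj)]

lemma pinv_mul_mul_pinv (hs : ProperSplitting A U V) {X Y : Matrix (Fin n) (Fin m) ℝ}
    (hA : IsMP A X) (hU : IsMP U Y) : Y * (A * X) = Y := by
  rw [hA.mul_eq_of_range_eq hU hs.2.1, ← Matrix.mul_assoc, hU.2.1]

lemma self_mul_of_isUnit_det (hinj : Function.Injective A.mulVec) {K : Matrix (Fin n) (Fin n) ℝ}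
    (hK : IsUnit K.det) : ProperSplitting A (A * K) (A * K - A) := by
  have hKsurj : LinearMap.range K.mulVecLin = ⊤ := by
    rw [LinearMap.range_eq_top, coe_mulVecLin, mulVec_surjective_iff_isUnit,
      isUnit_iff_isUnit_det]
    exact hK
  have hKinj : Function.Injective K.mulVec := by
    rw [mulVec_injective_iff_isUnit, isUnit_iff_isUnit_det]
    exact hK
  refine ⟨(sub_sub_cancel _ _).symm, ?_, ?_⟩
  · rw [mulVecLin_mul, LinearMap.range_comp_of_range_eq_top _ hKsurj]
  · rw [LinearMap.ker_eq_bot.mpr, LinearMap.ker_eq_bot.mpr] <;>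
      simp only [mulVecLin_mul, LinearMap.coe_comp, coe_mulVecLin]
    exacts [hinj, hinj.comp hKinj]

end ProperSplitting

section MonotoneOneSub

variable {n : ℕ} {H : Matrix (Fin n) (Fin n) ℝ} {x : Fin n → ℝ}

/-- If `y` had a negative entry, the entry minimising `y i / x i` would violate
`y ≥ H y`, because `H y ≥ s H x > s x` there for the (negative) minimal ratio `s`. -/
lemma nonneg_of_one_sub_mulVec_nonneg (hH : EntryNonneg H) (hx : ∀ i, 0 < x i)
    (hHx : ∀ i, (H *ᵥ x) i < x i) {y : Fin n → ℝ} (hy : 0 ≤ (1 - H) *ᵥ y) :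
    0 ≤ y := by
  intro i
  by_contra! hneg
  obtain ⟨i₀, -, hmin⟩ := Finset.exists_min_image Finset.univ (fun j => y j / x j)
    ⟨i, Finset.mem_univ i⟩
  set s := y i₀ / x i₀
  have hs : s < 0 := (hmin i (Finset.mem_univ i)).trans_lt (div_neg_of_neg_of_pos hneg (hx i))
  have hsx : ∀ j, s * x j ≤ y j := fun j =>
    (le_div_iff₀ (hx j)).mp (hmin j (Finset.mem_univ j))
  have hHy : s * (H *ᵥ x) i₀ ≤ (H *ᵥ y) i₀ := by
    simp only [mulVec, dotProduct, Finset.mul_sum]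
    exact Finset.sum_le_sum fun j _ => by nlinarith [hH i₀ j, hsx j]
  have hyi₀ : y i₀ = s * x i₀ := (div_mul_cancel₀ _ (hx i₀).ne').symm
  have hstrict : s * x i₀ < s * (H *ᵥ x) i₀ := mul_lt_mul_of_neg_left (hHx i₀) hs
  have hyi₀' := hy i₀
  simp only [sub_mulVec, one_mulVec, Pi.sub_apply, Pi.zero_apply] at hyi₀'
  linarith

lemma isUnit_det_one_sub (hH : EntryNonneg H) (hx : ∀ i, 0 < x i)
    (hHx : ∀ i, (H *ᵥ x) i < x i) : IsUnit (1 - H).det := by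
  rw [← isUnit_iff_isUnit_det, ← mulVec_injective_iff_isUnit, ← coe_mulVecLin,
    ← LinearMap.ker_eq_bot, LinearMap.ker_eq_bot']
  intro y hy
  rw [mulVecLin_apply] at hy
  refine le_antisymm ?_ (nonneg_of_one_sub_mulVec_nonneg hH hx hHx hy.ge)
  exact neg_nonneg.mp (nonneg_of_one_sub_mulVec_nonneg hH hx hHx (by rw [mulVec_neg, hy, neg_zero]))

lemma entryNonneg_inv_one_sub (hH : EntryNonneg H) (hx : ∀ i, 0 < x i)
    (hHx : ∀ i, (H *ᵥ x) i < x i) : EntryNonneg (1 - H)⁻¹ := by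
  intro i j
  have hcol : (1 - H) *ᵥ ((1 - H)⁻¹ *ᵥ Pi.single j 1) = Pi.single j 1 := by
    rw [mulVec_mulVec, mul_nonsing_inv _ (isUnit_det_one_sub hH hx hHx), one_mulVec]
  have := nonneg_of_one_sub_mulVec_nonneg hH hx hHx (hcol ▸ Pi.single_nonneg.mpr zero_le_one) i
  simpa [mulVec_single_one] using this

end MonotoneOneSub

lemma sum_diagonal_mul_mulVec_one_pos {ι : Type*} [Fintype ι] {m n : ℕ}
    {d : ι → Fin n → ℝ} {X : ι → Matrix (Fin n) (Fin m) ℝ} (hd : ∀ k i, 0 ≤ d k i)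
    (hsum : ∀ i, ∑ k, d k i = 1)
    (hX : ∀ k i, 0 < ∑ j, X k i j) (i : Fin n) :
    0 < ((∑ k, diagonal (d k) * X k) *ᵥ 1) i := by
  have hrow : ((∑ k, diagonal (d k) * X k) *ᵥ 1) i = ∑ k, d k i * ∑ j, X k i j := by
    simp only [mulVec, dotProduct, Pi.one_apply, mul_one, Matrix.sum_apply, diagonal_mul,
      Finset.mul_sum]
    exact Finset.sum_comm
  obtain ⟨k, -, hk⟩ : ∃ k ∈ Finset.univ, 0 < d k i := by
    by_contra! h
    have := Finset.sum_eq_zero fun k hk => le_antisymm (h k hk) (hd k i)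
    rw [hsum i] at this
    exact one_ne_zero this
  rw [hrow]
  exact Finset.sum_pos' (fun k _ => mul_nonneg (hd k i) (hX k i).le)
    ⟨k, Finset.mem_univ k, mul_pos hk (hX k i)⟩

section Multisplitting

variable {m n p : ℕ} {A : Matrix (Fin m) (Fin n) ℝ} {U V : Fin p → Matrix (Fin m) (Fin n) ℝ}
  {Ud : Fin p → Matrix (Fin n) (Fin m) ℝ} {E : Fin p → Matrix (Fin n) (Fin n) ℝ}

lemma sum_mul_pinv_mul_eq (hinj : Function.Injective A.mulVec)
    (hps : ∀ k, ProperSplitting A (U k) (V k)) (hU : ∀ k, IsMP (U k) (Ud k))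
    (hEsum : ∑ k, E k = 1) :
    ∑ k, E k * Ud k * V k = 1 - (∑ k, E k * Ud k) * A := by
  have hterm : ∀ k, E k * Ud k * V k = E k - E k * Ud k * A := fun k => by
    rw [Matrix.mul_assoc, (hps k).pinv_mul_eq hinj (hU k), Matrix.mul_sub, Matrix.mul_one,
      Matrix.mul_assoc]
  rw [Finset.sum_congr rfl fun k _ => hterm k, Finset.sum_sub_distrib, hEsum, Matrix.sum_mul]

lemma sum_mul_pinv_mul_mul_pinv {Ad : Matrix (Fin n) (Fin m) ℝ} (hA : IsMP A Ad)
    (hps : ∀ k, ProperSplitting A (U k) (V k)) (hU : ∀ k, IsMP (U k) (Ud k)) :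
    (∑ k, E k * Ud k) * (A * Ad) = ∑ k, E k * Ud k := by
  rw [Matrix.sum_mul]
  exact Finset.sum_congr rfl fun k _ => by
    rw [Matrix.mul_assoc, (hps k).pinv_mul_mul_pinv hA (hU k)]

lemma sum_mul_pinv_mulVec_one_pos (hinj : Function.Injective A.mulVec)
    (hps : ∀ k, ProperSplitting A (U k) (V k)) (hU : ∀ k, IsMP (U k) (Ud k))
    (hUd : ∀ k, EntryNonneg (Ud k)) (hE0 : ∀ k, EntryNonneg (E k))
    (hEdiag : ∀ k, (E k).IsDiag) (hEsum : ∑ k, E k = 1) (i : Fin n) :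
    0 < ((∑ k, E k * Ud k) *ᵥ 1) i := by
  have hdiag : ∑ k, E k * Ud k = ∑ k, diagonal (E k).diag * Ud k := by
    simp only [fun k => (hEdiag k).diagonal_diag]
  rw [hdiag]
  exact sum_diagonal_mul_mulVec_one_pos (fun k i => hE0 k i i)
    (fun i => by simpa [Matrix.sum_apply] using congr_fun (congr_fun hEsum i) i)
    (fun k => (hUd k).sum_row_pos_of_mul_eq_one
      ((hU k).mul_eq_one_of_injective ((hps k).injective hinj))) i

end Multisplitting

theorem stmt16 {m n p : ℕ} (A : Matrix (Fin m) (Fin n) ℝ)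
    (U V : Fin p → Matrix (Fin m) (Fin n) ℝ) (Ud : Fin p → Matrix (Fin n) (Fin m) ℝ)
    (E : Fin p → Matrix (Fin n) (Fin n) ℝ)
    (Ad : Matrix (Fin n) (Fin m) ℝ) (hA : IsMP A Ad) (hsemi : EntryNonneg Ad)
    (hAnn : EntryNonneg A)
    (hps : ∀ k, ProperSplitting A (U k) (V k)) (hU : ∀ k, IsMP (U k) (Ud k))
    (hE0 : ∀ k, EntryNonneg (E k)) (hEdiag : ∀ k, ∀ i j, i ≠ j → E k i j = 0)
    (hEsum : ∑ k, E k = 1)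
    (hUd : ∀ k, EntryNonneg (Ud k)) (hUdV : ∀ k, EntryNonneg (Ud k * V k))
    (hrange : ∀ k, LinearMap.range (E k).mulVecLin ≤ LinearMap.range (Aᵀ).mulVecLin)
    (H : Matrix (Fin n) (Fin n) ℝ) (hH : H = ∑ k, E k * Ud k * V k)
    (B : Matrix (Fin m) (Fin n) ℝ) (hB : B = A * (1 - H)⁻¹) :
    ProperSplitting A B (B - A) ∧ IsMP B ((1 - H) * Ad) ∧
    EntryNonneg ((1 - H) * Ad) ∧
    B - A = A * (1 - H)⁻¹ * H ∧ EntryNonneg (A * (1 - H)⁻¹ * H) := by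
  have hAinj : Function.Injective A.mulVec :=
    mulVec_injective_of_range_transpose_eq_top (range_eq_top_of_sum_eq_one hrange hEsum)
  have hAdA : Ad * A = 1 := hA.mul_eq_one_of_injective hAinj
  set W := ∑ k, E k * Ud k
  have hKW : 1 - H = W * A := by rw [hH, sum_mul_pinv_mul_eq hAinj hps hU hEsum, sub_sub_cancel]
  have hKAd : (1 - H) * Ad = W := by
    rw [hKW, Matrix.mul_assoc, sum_mul_pinv_mul_mul_pinv hA hps hU]
  have hHnn : EntryNonneg H := hH ▸ EntryNonneg.sum fun k => by
    rw [Matrix.mul_assoc]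
    exact (hE0 k).mul (hUdV k)
  set x := Ad *ᵥ 1
  have hx : ∀ i, 0 < x i := fun i => by
    simpa [x, mulVec, dotProduct] using hsemi.sum_row_pos_of_mul_eq_one hAdA i
  have hHx : ∀ i, (H *ᵥ x) i < x i := fun i => by
    have hKx : ((1 - H) *ᵥ x) i = (W *ᵥ 1) i := by rw [mulVec_mulVec, hKAd]
    simp only [sub_mulVec, one_mulVec, Pi.sub_apply] at hKx
    linarith [sum_mul_pinv_mulVec_one_pos hAinj hps hU hUd hE0 hEdiag hEsum i]
  have hK := isUnit_det_one_sub hHnn hx hHx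
  have hC : A * (1 - H)⁻¹ - A = A * (1 - H)⁻¹ * H :=
    calc A * (1 - H)⁻¹ - A = A * (1 - H)⁻¹ - A * (1 - H)⁻¹ * (1 - H) := by
          rw [Matrix.mul_assoc, nonsing_inv_mul _ hK, Matrix.mul_one]
      _ = A * (1 - H)⁻¹ * H := by rw [Matrix.mul_sub, Matrix.mul_one, sub_sub_cancel]
  subst hB
  exact ⟨ProperSplitting.self_mul_of_isUnit_det hAinj (isUnit_nonsing_inv_det _ hK),
    hA.mul_nonsing_inv_of_mul_eq_one hAdA hK,
    hKAd ▸ EntryNonneg.sum fun k => (hE0 k).mul (hUd k), hC,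
    (hAnn.mul (entryNonneg_inv_one_sub hHnn hx hHx)).mul hHnn⟩
end
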